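/- arXiv:1901.06629 — 4 statements merged into one kernel-verified Lean document; each statement's English description precedes it below -/
import Mathlib

section
/- Let $p$ be a probability mass function on a finite set $\mathcal{X}$ with $p(x) > 0$ for all $x$. Define the set function $f(W) = \sum_{x \in W} p(x) \log \frac{p(x)}{p(W)}$ for $W \subseteq \mathcal{X}$, where $p(W) = \sum_{x \in W} p(x)$ (with the convention $f(\emptyset) = 0$). Then $f$ is submodular: $f(A) + f(B) \geq f(A \cup B) + f(A \cap B)$ for all $A, B \subseteq \mathcal{X}$. -/
/-!
Writing `φ t = t log t`, we have `f W = ∑_{x ∈ W} φ (p x) - φ (p W)`. The first term is modular.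
Since `p(A ∩ B) ≤ p A, p B ≤ p(A ∪ B)` and `p A + p B = p(A ∪ B) + p(A ∩ B)`, the pair
`(p A, p B)` is majorized by `(p(A ∩ B), p(A ∪ B))`, so convexity of `φ` gives
`φ (p A) + φ (p B) ≤ φ (p(A ∪ B)) + φ (p(A ∩ B))`, which is submodularity of `-φ ∘ p`.
-/

open Finset

/-- The set function `f(W) = ∑_{x ∈ W} p(x) log (p(x) / p(W))`. -/
noncomputable def fset {X : Type*} [DecidableEq X] (p : X → ℝ) (W : Finset X) : ℝ :=
  ∑ x ∈ W, p x * Real.log (p x / ∑ y ∈ W, p y)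

theorem ConvexOn.add_le_add_of_add_eq {s : Set ℝ} {f : ℝ → ℝ} (hf : ConvexOn ℝ s f)
    {i a b u : ℝ} (hi : i ∈ s) (hu : u ∈ s) (hia : i ≤ a) (hau : a ≤ u)
    (hsum : a + b = i + u) : f a + f b ≤ f i + f u := by
  obtain ⟨t₁, t₂, ht₁, ht₂, ht, rfl⟩ : a ∈ segment ℝ i u := by
    rw [segment_eq_Icc (hia.trans hau)]; exact ⟨hia, hau⟩
  have hb : b = t₂ • i + t₁ • u := by
    simp only [smul_eq_mul] at hsum ⊢
    linear_combination hsum - (i + u) * ht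
  have hfa := hf.2 hi hu ht₁ ht₂ ht
  have hfb := hf.2 hi hu ht₂ ht₁ (by rw [add_comm, ht])
  rw [← hb] at hfb
  simp only [smul_eq_mul] at hfa hfb
  linear_combination hfa + hfb + (f i + f u) * ht

theorem fset_eq_sum_mul_log_sub {X : Type*} [DecidableEq X] {p : X → ℝ} {W : Finset X}
    (hp : ∀ x ∈ W, 0 < p x) :
    fset p W = ∑ x ∈ W, p x * Real.log (p x) - (∑ x ∈ W, p x) * Real.log (∑ x ∈ W, p x) := by
  rcases W.eq_empty_or_nonempty with rfl | hW
  · simp [fset]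
  have hpos : 0 < ∑ y ∈ W, p y := sum_pos hp hW
  rw [fset, sum_mul, ← sum_sub_distrib]
  refine sum_congr rfl fun x hx => ?_
  rw [Real.log_div (hp x hx).ne' hpos.ne']
  ring

theorem fset_submodular_general {X : Type*} [DecidableEq X] (p : X → ℝ)
    (hp : ∀ x, 0 < p x) :
    ∀ A B : Finset X, fset p (A ∪ B) + fset p (A ∩ B) ≤ fset p A + fset p B := by
  intro A B
  have hmono {S T : Finset X} (h : S ⊆ T) : ∑ x ∈ S, p x ≤ ∑ x ∈ T, p x :=
    sum_le_sum_of_subset_of_nonneg h fun x _ _ => (hp x).le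
  have hconvex := Real.convexOn_mul_log.add_le_add_of_add_eq
    (sum_nonneg fun x _ => (hp x).le : (0 : ℝ) ≤ ∑ x ∈ A ∩ B, p x)
    (Set.mem_Ici.2 (sum_nonneg fun x _ => (hp x).le) : (0 : ℝ) ≤ ∑ x ∈ A ∪ B, p x)
    (hmono inter_subset_left) (hmono subset_union_left)
    (sum_union_inter.symm.trans (add_comm _ _))
  have hmodular := sum_union_inter (s₁ := A) (s₂ := B) (f := fun x => p x * Real.log (p x))
  simp only [fset_eq_sum_mul_log_sub fun x _ => hp x]
  linarith

theorem fset_submodular {X : Type*} [Fintype X] [DecidableEq X] (p : X → ℝ)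
    (hp : ∀ x, 0 < p x) (hsum : ∑ x, p x = 1) :
    ∀ A B : Finset X, fset p (A ∪ B) + fset p (A ∩ B) ≤ fset p A + fset p B :=
  fset_submodular_general p hp
end

section
/- Let $p(s,x)$ be a joint probability mass function on finite sets $\mathcal{S} \times \mathcal{X}$ with $p(s,x) > 0$ for all pairs. Define $g(W) = \sum_{s \in \mathcal{S}} \sum_{x \in W} p(s,x) \log \frac{p(s,x)}{p(s,W)}$ where $p(s,W) = \sum_{x \in W} p(s,x)$ (and $g(\emptyset)=0$). Then $g$ is submodular and nonincreasing: $g(A)+g(B) \geq g(A\cup B) + g(A\cap B)$ for all $A,B \subseteq \mathcal{X}$, and $g(W) \leq g(Y)$ whenever $Y \subseteq W$. -/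
/-!
For a nonnegative weight `w`, `∑_{x ∈ W} w x log (w x / w(W)) = ∑_{x ∈ W} φ (w x) - φ (w(W))`
with `φ t = t log t`. The first sum is modular in `W`; since `φ` is convex and
`w(A ∩ B) ≤ w(A), w(B)` with `w(A ∩ B) + w(A ∪ B) = w(A) + w(B)`, the second term is
submodular. A submodular set function that vanishes at `∅` and is nonpositive is
antitone: `g(W) ≤ g(Y) + g(W \ Y) ≤ g(Y)`. Both properties survive summation over `s`.
-/

open Finset

/-- The set function `g(W) = ∑_s ∑_{x ∈ W} p(s,x) log (p(s,x) / p(s,W))`. -/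
noncomputable def gset {S X : Type*} [Fintype S] [DecidableEq X] (p : S → X → ℝ)
    (W : Finset X) : ℝ :=
  ∑ s, ∑ x ∈ W, p s x * Real.log (p s x / ∑ y ∈ W, p s y)

open Real

theorem ConvexOn.add_le_add_of_add_eq_s4 {s : Set ℝ} {f : ℝ → ℝ} (hf : ConvexOn ℝ s f)
    {a b c d : ℝ} (ha : a ∈ s) (hd : d ∈ s) (hab : a ≤ b) (hac : a ≤ c) (h : a + d = b + c) :
    f b + f c ≤ f a + f d := by
  rcases (hab.trans (by linarith : b ≤ d)).eq_or_lt with had | had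
  · obtain rfl : b = a := by linarith
    obtain rfl : c = b := by linarith
    obtain rfl : d = c := by linarith
    rfl
  · set θ := (d - b) / (d - a) with hθ
    have hθ0 : 0 ≤ θ := div_nonneg (by linarith) (by linarith)
    have hθ1 : θ ≤ 1 := (div_le_one (by linarith)).2 (by linarith)
    have hb : θ • a + (1 - θ) • d = b := by
      rw [smul_eq_mul, smul_eq_mul, hθ]; field_simp; ring
    have hc : (1 - θ) • a + θ • d = c := by
      rw [smul_eq_mul, smul_eq_mul, hθ]; field_simp; linear_combination (d - a) * h
    have h₁ := hf.2 ha hd hθ0 (sub_nonneg.2 hθ1) (add_sub_cancel θ 1)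
    have h₂ := hf.2 ha hd (sub_nonneg.2 hθ1) hθ0 (sub_add_cancel 1 θ)
    rw [hb] at h₁
    rw [hc] at h₂
    simp only [smul_eq_mul] at h₁ h₂
    linarith

theorem Finset.antitone_of_submodular_of_nonpos {X : Type*} [DecidableEq X]
    {f : Finset X → ℝ} (hsub : ∀ A B, f (A ∪ B) + f (A ∩ B) ≤ f A + f B) (hempty : f ∅ = 0)
    (hnonpos : ∀ A, f A ≤ 0) : Antitone f := by
  intro Y W hYW
  have h := hsub Y (W \ Y)
  rw [union_sdiff_of_subset hYW, inter_sdiff_self, hempty] at h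
  linarith [hnonpos (W \ Y)]

/-- `-w(W)` times the entropy of the normalisation of `w` to `W`. -/
noncomputable def weightedNegEntropy {X : Type*} (w : X → ℝ) (W : Finset X) : ℝ :=
  ∑ x ∈ W, w x * log (w x / ∑ y ∈ W, w y)

section weightedNegEntropy

variable {X : Type*} {w : X → ℝ}

theorem weightedNegEntropy_eq (hw : ∀ x, 0 ≤ w x) (W : Finset X) :
    weightedNegEntropy w W =
      ∑ x ∈ W, w x * log (w x) - (∑ x ∈ W, w x) * log (∑ x ∈ W, w x) := by
  rw [weightedNegEntropy, sum_mul, ← sum_sub_distrib]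
  refine sum_congr rfl fun x hx => ?_
  rcases (hw x).eq_or_lt with hx0 | hx0
  · simp [← hx0]
  · have hW : 0 < ∑ y ∈ W, w y := hx0.trans_le (single_le_sum (fun y _ => hw y) hx)
    rw [log_div hx0.ne' hW.ne', mul_sub]

theorem weightedNegEntropy_nonpos (hw : ∀ x, 0 ≤ w x) (W : Finset X) :
    weightedNegEntropy w W ≤ 0 :=
  sum_nonpos fun x hx => mul_nonpos_of_nonneg_of_nonpos (hw x) <|
    log_nonpos (div_nonneg (hw x) (sum_nonneg fun y _ => hw y))
      (div_le_one_of_le₀ (single_le_sum (fun y _ => hw y) hx) (sum_nonneg fun y _ => hw y))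

@[simp]
theorem weightedNegEntropy_empty : weightedNegEntropy w ∅ = 0 :=
  sum_empty

variable [DecidableEq X]

theorem weightedNegEntropy_union_add_inter_le (hw : ∀ x, 0 ≤ w x) (A B : Finset X) :
    weightedNegEntropy w (A ∪ B) + weightedNegEntropy w (A ∩ B) ≤
      weightedNegEntropy w A + weightedNegEntropy w B := by
  simp only [weightedNegEntropy_eq hw]
  have hmass : ∀ W : Finset X, 0 ≤ ∑ x ∈ W, w x := fun W => sum_nonneg fun x _ => hw x
  have hconvex := convexOn_mul_log.add_le_add_of_add_eq_s4 (hmass (A ∩ B)) (hmass (A ∪ B))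
    (sum_le_sum_of_subset_of_nonneg inter_subset_left fun x _ _ => hw x)
    (sum_le_sum_of_subset_of_nonneg inter_subset_right fun x _ _ => hw x)
    ((add_comm _ _).trans sum_union_inter)
  have hmodular : ∑ x ∈ A ∪ B, w x * log (w x) + ∑ x ∈ A ∩ B, w x * log (w x) =
      ∑ x ∈ A, w x * log (w x) + ∑ x ∈ B, w x * log (w x) :=
    sum_union_inter
  linarith

theorem weightedNegEntropy_antitone (hw : ∀ x, 0 ≤ w x) : Antitone (weightedNegEntropy w) :=
  antitone_of_submodular_of_nonpos (weightedNegEntropy_union_add_inter_le hw)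
    weightedNegEntropy_empty (weightedNegEntropy_nonpos hw)

end weightedNegEntropy

theorem gset_submodular_nonincreasing_general {S X : Type*} [Fintype S] [DecidableEq X]
    (p : S → X → ℝ) (hp : ∀ s x, 0 < p s x) :
    (∀ A B : Finset X, gset p (A ∪ B) + gset p (A ∩ B) ≤ gset p A + gset p B) ∧
    (∀ Y W : Finset X, Y ⊆ W → gset p W ≤ gset p Y) := by
  have hw : ∀ s x, 0 ≤ p s x := fun s x => (hp s x).le
  have hgset : ∀ W, gset p W = ∑ s, weightedNegEntropy (p s) W := fun W => rfl
  refine ⟨fun A B => ?_, fun Y W hYW => ?_⟩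
  · simp only [hgset, ← sum_add_distrib]
    exact sum_le_sum fun s _ => weightedNegEntropy_union_add_inter_le (hw s) A B
  · simp only [hgset]
    exact sum_le_sum fun s _ => weightedNegEntropy_antitone (hw s) hYW

theorem gset_submodular_nonincreasing {S X : Type*} [Fintype S] [Fintype X] [DecidableEq X]
    (p : S → X → ℝ) (hp : ∀ s x, 0 < p s x) (hsum : ∑ s, ∑ x, p s x = 1) :
    (∀ A B : Finset X, gset p (A ∪ B) + gset p (A ∩ B) ≤ gset p A + gset p B) ∧
    (∀ Y W : Finset X, Y ⊆ W → gset p W ≤ gset p Y) :=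
  gset_submodular_nonincreasing_general p hp
end

section
/- With the setup of the merging operation: for any $W \subseteq \mathcal{X}$ and any $\lambda \in \mathbb{R}$, $I(S; X_W) - \lambda I(X; X_W) = \big[I(S;X) - \lambda H(X)\big] + (1-\lambda) f(W) - g(W)$. Consequently, minimizing $I(S; X_W) - \lambda I(X; X_W)$ over $W \subseteq \mathcal{X}$ is equivalent to minimizing $(1-\lambda) f(W) - g(W)$. -/
open Finset

/-- Mutual information of a joint pmf `q` on a pair of finite alphabets,
`I = ∑_{a,b} q(a,b) log ( q(a,b) / (q_A(a) q_B(b)) )`, with natural logarithm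
(and the convention `0 log 0 = 0`, which holds definitionally here). -/
noncomputable def mi {A B : Type*} [Fintype A] [Fintype B] (q : A → B → ℝ) : ℝ :=
  ∑ a, ∑ b, q a b * Real.log (q a b / ((∑ b', q a b') * (∑ a', q a' b)))

/-- Shannon entropy of a pmf on a finite alphabet (natural logarithm). -/
noncomputable def ent {A : Type*} [Fintype A] (p : A → ℝ) : ℝ :=
  -∑ a, p a * Real.log (p a)

/-- Merging map: all elements of `W` are mapped to the single new symbol `none`,
the remaining elements `x ∉ W` are kept as `some x`. -/
def mergeMap {X : Type*} [DecidableEq X] (W : Finset X) (x : X) : Option X :=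
  if x ∈ W then none else some x

/-- Joint pmf of `(S, X_W)` where `X_W = mergeMap W ∘ X`. -/
noncomputable def mergedJoint {S X : Type*} [DecidableEq X] (W : Finset X) (p : S → X → ℝ) :
    S → Option X → ℝ :=
  fun s o => match o with
  | none => ∑ x ∈ W, p s x
  | some x => if x ∈ W then 0 else p s x

/-- Joint pmf of `(X, X_W)`: `X_W` is the deterministic function `mergeMap W` of `X`. -/
noncomputable def selfMergedJoint {X : Type*} [DecidableEq X] (W : Finset X) (pX : X → ℝ) :
    X → Option X → ℝ :=
  fun x o => if mergeMap W x = o then pX x else 0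

private lemma log3_aux {a b c : ℝ} (ha : 0 < a) (hb : 0 < b) (hc : 0 < c) :
    a * Real.log (a / (b * c)) = a * Real.log a - a * Real.log b - a * Real.log c := by
  rw [Real.log_div ha.ne' (by positivity), Real.log_mul hb.ne' hc.ne']; ring

private lemma mi_self_aux {X : Type*} [Fintype X] [DecidableEq X] (pX : X → ℝ)
    (hpX : ∀ x, 0 < pX x) (W : Finset X) :
    mi (selfMergedJoint W pX) = ent pX + fset pX W := by
  have hrow : ∀ x, (∑ o : Option X, selfMergedJoint W pX x o) = pX x := by
    intro x
    rw [Fintype.sum_option]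
    by_cases hx : x ∈ W <;> simp [selfMergedJoint, mergeMap, hx]
  have hcolnone : (∑ x, selfMergedJoint W pX x none) = ∑ y ∈ W, pX y := by
    simp [selfMergedJoint, mergeMap, Finset.sum_ite_mem]
  have hcolsome : ∀ y, (∑ x, selfMergedJoint W pX x (some y)) = if y ∈ W then 0 else pX y := by
    intro y
    have : ∀ x, selfMergedJoint W pX x (some y) = if x = y then (if y ∈ W then 0 else pX y) else 0 := by
      intro x
      simp only [selfMergedJoint, mergeMap]
      split_ifs with h1 h2 h3 h4 h5 <;> simp_all
    simp [this]
  set PW := ∑ y ∈ W, pX y with hPW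
  have key : mi (selfMergedJoint W pX) =
      ∑ x, (if x ∈ W then pX x * Real.log (pX x / (pX x * PW))
            else pX x * Real.log (pX x / (pX x * pX x))) := by
    unfold mi
    apply Finset.sum_congr rfl
    intro x _
    rw [Fintype.sum_option]
    simp only [hrow, hcolnone, hcolsome]
    by_cases hx : x ∈ W
    · have h0 : ∀ y : X, selfMergedJoint W pX x (some y) = 0 := by
        intro y; simp [selfMergedJoint, mergeMap, hx]
      simp [selfMergedJoint, mergeMap, hx, h0]
    · have h0 : selfMergedJoint W pX x none = 0 := by
        simp [selfMergedJoint, mergeMap, hx]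
      have h1 : ∀ y : X, selfMergedJoint W pX x (some y)
          = if y = x then pX x else 0 := by
        intro y; simp only [selfMergedJoint, mergeMap, hx, if_neg hx]
        split_ifs with h2 h3 h4 <;> simp_all [eq_comm]
      simp [h0, h1, hx, Finset.sum_ite_eq]
  rcases W.eq_empty_or_nonempty with h | hW
  · subst h
    simp only [Finset.notMem_empty, if_false] at key
    rw [key]
    unfold ent fset
    simp only [Finset.sum_empty, add_zero, ← Finset.sum_neg_distrib]
    apply Finset.sum_congr rfl
    intro x _
    rw [log3_aux (hpX x) (hpX x) (hpX x)]; ring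
  · have hPWpos : 0 < PW := Finset.sum_pos (fun y _ => hpX y) hW
    rw [key]
    have key2 : ∀ x, (if x ∈ W then pX x * Real.log (pX x / (pX x * PW))
            else pX x * Real.log (pX x / (pX x * pX x))) =
        (if x ∈ W then -(pX x * Real.log PW) else -(pX x * Real.log (pX x))) := by
      intro x
      by_cases hx : x ∈ W <;> simp only [hx, if_true, if_false]
      · rw [log3_aux (hpX x) (hpX x) hPWpos]; ring
      · rw [log3_aux (hpX x) (hpX x) (hpX x)]; ring
    simp only [key2]
    rw [Finset.sum_ite, Finset.filter_mem_eq_inter, Finset.univ_inter]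
    unfold ent fset
    rw [← Finset.sum_filter_add_sum_filter_not univ (· ∈ W) (fun x => pX x * Real.log (pX x)),
      Finset.filter_mem_eq_inter, Finset.univ_inter]
    have : ∀ x ∈ W, pX x * Real.log (pX x / PW) = pX x * Real.log (pX x) - pX x * Real.log PW := by
      intro x hx
      rw [Real.log_div (hpX x).ne' hPWpos.ne']; ring
    rw [Finset.sum_congr rfl this]
    simp [Finset.sum_sub_distrib, Finset.sum_neg_distrib]
    ring

private lemma mi_merged_aux {S X : Type*} [Fintype S] [Fintype X] [DecidableEq X]
    (p : S → X → ℝ) (hp : ∀ s x, 0 < p s x) (W : Finset X)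
    [Nonempty S] [Nonempty X] :
    mi (mergedJoint W p) = mi p + fset (fun x => ∑ s, p s x) W - gset p W := by
  rcases W.eq_empty_or_nonempty with h | hW
  · subst h
    simp [mi, mergedJoint, fset, gset, Fintype.sum_option]
  set pX : X → ℝ := fun x => ∑ s, p s x with hpXdef
  set pS : S → ℝ := fun s => ∑ x, p s x with hpSdef
  have hpX : ∀ x, 0 < pX x := fun x => Finset.sum_pos (fun s _ => hp s x) univ_nonempty
  have hpS : ∀ s, 0 < pS s := fun s => Finset.sum_pos (fun x _ => hp s x) univ_nonempty
  set PW : ℝ := ∑ x ∈ W, pX x with hPWdef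
  have hPW : 0 < PW := Finset.sum_pos (fun x _ => hpX x) hW
  have hsW : ∀ s, 0 < ∑ x ∈ W, p s x := fun s => Finset.sum_pos (fun x _ => hp s x) hW
  have hrow : ∀ s, (∑ o : Option X, mergedJoint W p s o) = pS s := by
    intro s
    rw [Fintype.sum_option]
    have h1 : pS s = ∑ x, ((if x ∈ W then p s x else 0) + (if x ∈ W then 0 else p s x)) := by
      apply Finset.sum_congr rfl; intro x _; split_ifs <;> ring
    rw [h1, Finset.sum_add_distrib, Finset.sum_ite_mem, Finset.univ_inter]
    rfl
  have hcolnone : (∑ s, mergedJoint W p s none) = PW := by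
    show (∑ s, ∑ x ∈ W, p s x) = ∑ x ∈ W, ∑ s, p s x
    exact Finset.sum_comm
  have hcolsome : ∀ x, (∑ s, mergedJoint W p s (some x)) = if x ∈ W then 0 else pX x := by
    intro x
    by_cases hx : x ∈ W <;> simp [mergedJoint, hx, hpXdef]
  have key : mi (mergedJoint W p) =
      ∑ s, ((∑ x ∈ W, p s x) * Real.log ((∑ x ∈ W, p s x) / (pS s * PW)) +
        ∑ x, (if x ∈ W then 0 else p s x * Real.log (p s x / (pS s * pX x)))) := by
    unfold mi
    apply Finset.sum_congr rfl
    intro s _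
    rw [Fintype.sum_option]
    simp only [hrow, hcolnone, hcolsome]
    congr 1
    apply Finset.sum_congr rfl
    intro x _
    by_cases hx : x ∈ W <;> simp [mergedJoint, hx]
  have hmip : mi p = ∑ s, ((∑ x ∈ W, p s x * Real.log (p s x / (pS s * pX x))) +
      ∑ x, (if x ∈ W then 0 else p s x * Real.log (p s x / (pS s * pX x)))) := by
    unfold mi
    apply Finset.sum_congr rfl
    intro s _
    have h1 : ∀ x, p s x * Real.log (p s x / (pS s * pX x)) =
        (if x ∈ W then p s x * Real.log (p s x / (pS s * pX x)) else 0) +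
        (if x ∈ W then 0 else p s x * Real.log (p s x / (pS s * pX x))) := by
      intro x; split_ifs <;> ring
    rw [Finset.sum_congr rfl (fun x _ => h1 x), Finset.sum_add_distrib,
      Finset.sum_ite_mem, Finset.univ_inter]
  have hdiff : mi (mergedJoint W p) - mi p =
      ∑ s, ((∑ x ∈ W, p s x) * Real.log ((∑ x ∈ W, p s x) / (pS s * PW)) -
        ∑ x ∈ W, p s x * Real.log (p s x / (pS s * pX x))) := by
    rw [key, hmip, ← Finset.sum_sub_distrib]
    apply Finset.sum_congr rfl
    intro s _; ring
  have hper : ∀ s, (∑ x ∈ W, p s x) * Real.log ((∑ x ∈ W, p s x) / (pS s * PW)) -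
        ∑ x ∈ W, p s x * Real.log (p s x / (pS s * pX x)) =
      ((∑ x ∈ W, p s x) * Real.log (∑ x ∈ W, p s x)
        - (∑ x ∈ W, p s x) * Real.log PW)
        - ∑ x ∈ W, (p s x * Real.log (p s x) - p s x * Real.log (pX x)) := by
    intro s
    rw [log3_aux (hsW s) (hpS s) hPW]
    have h1 : ∀ x ∈ W, p s x * Real.log (p s x / (pS s * pX x)) =
        p s x * Real.log (p s x) - p s x * Real.log (pS s) - p s x * Real.log (pX x) :=
      fun x _ => log3_aux (hp s x) (hpS s) (hpX x)
    rw [Finset.sum_congr rfl h1]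
    simp only [Finset.sum_sub_distrib]
    rw [← Finset.sum_mul]
    ring
  rw [Finset.sum_congr rfl (fun s _ => hper s)] at hdiff
  have hA : (∑ s, ∑ x ∈ W, (p s x * Real.log (p s x) - p s x * Real.log (pX x))) =
      (∑ s, ∑ x ∈ W, p s x * Real.log (p s x)) - ∑ x ∈ W, pX x * Real.log (pX x) := by
    simp only [Finset.sum_sub_distrib]
    congr 1
    rw [Finset.sum_comm]
    apply Finset.sum_congr rfl
    intro x _
    rw [← Finset.sum_mul]
  have hB : (∑ s, (∑ x ∈ W, p s x) * Real.log PW) = PW * Real.log PW := by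
    rw [← Finset.sum_mul]
    congr 1
  have hfset : fset pX W = (∑ x ∈ W, pX x * Real.log (pX x)) - PW * Real.log PW := by
    unfold fset
    rw [← hPWdef]
    have h1 : ∀ x ∈ W, pX x * Real.log (pX x / PW) =
        pX x * Real.log (pX x) - pX x * Real.log PW := by
      intro x _; rw [Real.log_div (hpX x).ne' hPW.ne']; ring
    rw [Finset.sum_congr rfl h1, Finset.sum_sub_distrib, ← Finset.sum_mul]
  have hgset : gset p W = (∑ s, ∑ x ∈ W, p s x * Real.log (p s x)) -
      ∑ s, (∑ x ∈ W, p s x) * Real.log (∑ x ∈ W, p s x) := by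
    unfold gset
    rw [← Finset.sum_sub_distrib]
    apply Finset.sum_congr rfl
    intro s _
    have h1 : ∀ x ∈ W, p s x * Real.log (p s x / ∑ y ∈ W, p s y) =
        p s x * Real.log (p s x) - p s x * Real.log (∑ y ∈ W, p s y) := by
      intro x _; rw [Real.log_div (hp s x).ne' (hsW s).ne']; ring
    rw [Finset.sum_congr rfl h1, Finset.sum_sub_distrib, ← Finset.sum_mul]
  have hdiff2 : mi (mergedJoint W p) - mi p =
      (∑ s, (∑ x ∈ W, p s x) * Real.log (∑ x ∈ W, p s x)) - PW * Real.log PW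
      - ((∑ s, ∑ x ∈ W, p s x * Real.log (p s x)) - ∑ x ∈ W, pX x * Real.log (pX x)) := by
    rw [hdiff]
    simp only [Finset.sum_sub_distrib]
    rw [hB]
    have := hA
    simp only [Finset.sum_sub_distrib] at this
    linarith [this]
  rw [hfset, hgset]
  linarith [hdiff2]

theorem lagrangian_merge_identity {S X : Type*} [Fintype S] [Fintype X] [DecidableEq X]
    (p : S → X → ℝ) (hp : ∀ s x, 0 < p s x) (hsum : ∑ s, ∑ x, p s x = 1) (lam : ℝ) :
    (∀ W : Finset X,
      mi (mergedJoint W p) - lam * mi (selfMergedJoint W (fun x => ∑ s, p s x)) =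
        (mi p - lam * ent (fun x => ∑ s, p s x)) +
          (1 - lam) * fset (fun x => ∑ s, p s x) W - gset p W) ∧
    (∀ W₁ W₂ : Finset X,
      (mi (mergedJoint W₁ p) - lam * mi (selfMergedJoint W₁ (fun x => ∑ s, p s x)) ≤
        mi (mergedJoint W₂ p) - lam * mi (selfMergedJoint W₂ (fun x => ∑ s, p s x))) ↔
      ((1 - lam) * fset (fun x => ∑ s, p s x) W₁ - gset p W₁ ≤
        (1 - lam) * fset (fun x => ∑ s, p s x) W₂ - gset p W₂)) := by
  have hNS : Nonempty S := by
    by_contra h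
    rw [not_nonempty_iff] at h
    simp at hsum
  have hNX : Nonempty X := by
    by_contra h
    rw [not_nonempty_iff] at h
    simp at hsum
  have hpX : ∀ x, 0 < ∑ s, p s x := fun x => Finset.sum_pos (fun s _ => hp s x) univ_nonempty
  have main : ∀ W : Finset X,
      mi (mergedJoint W p) - lam * mi (selfMergedJoint W (fun x => ∑ s, p s x)) =
        (mi p - lam * ent (fun x => ∑ s, p s x)) +
          (1 - lam) * fset (fun x => ∑ s, p s x) W - gset p W := by
    intro W
    rw [mi_merged_aux p hp W, mi_self_aux (fun x => ∑ s, p s x) hpX W]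
    ring
  refine ⟨main, fun W₁ W₂ => ?_⟩
  rw [main W₁, main W₂]
  constructor <;> intro h <;> linarith
end

section
/- Suppose $W^* \subseteq \hat{\mathcal{X}}^{(k)}$ minimizes $(1-\lambda) f(W) - g(W)$ over all $W \subseteq \hat{\mathcal{X}}^{(k)}$ for some $\lambda \in [0,1]$, and suppose $|W^*| \geq 2$. Then merging $W^*$ does not increase the Lagrangian: $I(S; \hat{X}^{(k)}_{W^*}) - \lambda I(\hat{X}^{(k)}; \hat{X}^{(k)}_{W^*}) \leq I(S; \hat{X}^{(k)}) - \lambda H(\hat{X}^{(k)})$, i.e., each iteration of IAC-MDSF does not increase the objective $I(S;\hat{X}) - \lambda I(X;\hat{X})$ compared against the no-merge baseline (where $I(\hat{X}^{(k)};\hat{X}^{(k)}) = H(\hat{X}^{(k)})$). -/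
open Finset

lemma miSelf {X : Type*} [Fintype X] [DecidableEq X] (pX : X → ℝ)
    (hpX : ∀ x, 0 < pX x) (W : Finset X) (hW : W.Nonempty) :
    mi (selfMergedJoint W pX) = ent pX + fset pX W := by
  have hPW : 0 < ∑ y ∈ W, pX y := Finset.sum_pos (fun y _ => hpX y) hW
  have hrow : ∀ x, (∑ o, selfMergedJoint W pX x o) = pX x := by
    intro x
    rw [Fintype.sum_option]
    by_cases hx : x ∈ W <;> simp [selfMergedJoint, mergeMap, hx]
  have hcolnone : (∑ x, selfMergedJoint W pX x none) = ∑ y ∈ W, pX y := by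
    rw [Finset.sum_congr rfl (fun x _ => show selfMergedJoint W pX x none
        = if x ∈ W then pX x else 0 by by_cases hx : x ∈ W <;> simp [selfMergedJoint, mergeMap, hx])]
    simp [Finset.sum_ite_mem]
  have hcolsome : ∀ y, (∑ x, selfMergedJoint W pX x (some y)) = if y ∈ W then 0 else pX y := by
    intro y
    by_cases hy : y ∈ W
    · rw [if_pos hy]
      apply Finset.sum_eq_zero
      intro x _
      by_cases hx : x ∈ W
      · simp [selfMergedJoint, mergeMap, hx]
      · simp only [selfMergedJoint, mergeMap, if_neg hx]
        rw [if_neg]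
        simp only [Option.some.injEq]
        rintro rfl; exact hx hy
    · rw [if_neg hy]
      rw [Finset.sum_congr rfl (fun x _ => show selfMergedJoint W pX x (some y)
          = if x = y then pX x else 0 by
        by_cases hx : x ∈ W
        · simp only [selfMergedJoint, mergeMap, if_pos hx]
          rw [if_neg (by simp), if_neg]; rintro rfl; exact hy hx
        · simp [selfMergedJoint, mergeMap, hx])]
      simp
  have hinner : ∀ x, (∑ o, selfMergedJoint W pX x o * Real.log (selfMergedJoint W pX x o /
      ((∑ o', selfMergedJoint W pX x o') * (∑ x', selfMergedJoint W pX x' o)))) =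
      if x ∈ W then -(pX x * Real.log (∑ y ∈ W, pX y)) else -(pX x * Real.log (pX x)) := by
    intro x
    rw [Fintype.sum_option]
    simp only [hrow, hcolnone, hcolsome]
    by_cases hx : x ∈ W
    · rw [if_pos hx]
      have h1 : selfMergedJoint W pX x none = pX x := by simp [selfMergedJoint, mergeMap, hx]
      have h2 : ∀ y, selfMergedJoint W pX x (some y) = 0 := by
        intro y; simp [selfMergedJoint, mergeMap, hx]
      simp only [h1, h2, zero_mul, Finset.sum_const_zero, add_zero]
      have : pX x / (pX x * ∑ y ∈ W, pX y) = (∑ y ∈ W, pX y)⁻¹ := by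
        rw [div_mul_eq_div_div, div_self (ne_of_gt (hpX x)), one_div]
      rw [this, Real.log_inv]; ring
    · rw [if_neg hx]
      have h1 : selfMergedJoint W pX x none = 0 := by simp [selfMergedJoint, mergeMap, hx]
      have h2 : ∀ y, selfMergedJoint W pX x (some y) = if x = y then pX x else 0 := by
        intro y; by_cases hxy : x = y
        · subst hxy; simp [selfMergedJoint, mergeMap, hx]
        · simp [selfMergedJoint, mergeMap, hx, hxy]
      simp only [h1, h2, zero_mul, zero_add]
      rw [Finset.sum_congr rfl (fun y _ => show
          (if x = y then pX x else 0) * Real.log ((if x = y then pX x else 0) /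
            (pX x * if y ∈ W then 0 else pX y)) =
          if x = y then pX x * Real.log (pX x / (pX x * if y ∈ W then 0 else pX y)) else 0 by
        by_cases hxy : x = y <;> simp [hxy])]
      rw [Finset.sum_ite_eq (Finset.univ) x (fun y => pX x * Real.log (pX x / (pX x * if y ∈ W then 0 else pX y)))]
      rw [if_pos (Finset.mem_univ x), if_neg hx]
      have : pX x / (pX x * pX x) = (pX x)⁻¹ := by
        rw [div_mul_eq_div_div, div_self (ne_of_gt (hpX x)), one_div]
      rw [this, Real.log_inv]; ring
  rw [show mi (selfMergedJoint W pX) = ∑ x, (if x ∈ W then -(pX x * Real.log (∑ y ∈ W, pX y))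
      else -(pX x * Real.log (pX x))) from Finset.sum_congr rfl (fun x _ => hinner x)]
  rw [← Finset.sum_add_sum_compl W]
  rw [Finset.sum_congr rfl (fun x hx => if_pos hx),
      Finset.sum_congr rfl (fun x hx => if_neg (by simpa using hx))]
  unfold ent fset
  rw [← Finset.sum_add_sum_compl W (fun x => pX x * Real.log (pX x))]
  rw [Finset.sum_congr rfl (fun x (hx : x ∈ W) => show pX x * Real.log (pX x / ∑ y ∈ W, pX y)
      = pX x * Real.log (pX x) - pX x * Real.log (∑ y ∈ W, pX y) by
    rw [Real.log_div (ne_of_gt (hpX x)) (ne_of_gt hPW)]; ring)]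
  rw [Finset.sum_sub_distrib, Finset.sum_neg_distrib, Finset.sum_neg_distrib]
  ring


lemma sum_ite_not_mem {X : Type*} [Fintype X] [DecidableEq X] (W : Finset X) (f : X → ℝ) :
    ∑ x, (if x ∈ W then 0 else f x) = ∑ x ∈ Wᶜ, f x := by
  rw [← Finset.sum_add_sum_compl W,
    Finset.sum_congr rfl (fun x hx => if_pos hx),
    Finset.sum_congr rfl (fun x (hx : x ∈ Wᶜ) => if_neg (by simpa using hx)),
    Finset.sum_const_zero, zero_add]

lemma miMerged {S X : Type*} [Fintype S] [Fintype X] [DecidableEq X] [Nonempty S]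
    (p : S → X → ℝ) (hp : ∀ s x, 0 < p s x) (W : Finset X) (hW : W.Nonempty) :
    mi (mergedJoint W p) = mi p + fset (fun x => ∑ s, p s x) W - gset p W := by
  have hX : Nonempty X := ⟨hW.choose⟩
  set pX : X → ℝ := fun x => ∑ s, p s x with hpXdef
  set pS : S → ℝ := fun s => ∑ x, p s x with hpSdef
  set pW : S → ℝ := fun s => ∑ x ∈ W, p s x with hpWdef
  have hpX : ∀ x, 0 < pX x := fun x => Finset.sum_pos (fun s _ => hp s x) Finset.univ_nonempty
  have hpS : ∀ s, 0 < pS s := fun s => Finset.sum_pos (fun x _ => hp s x) Finset.univ_nonempty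
  have hpW : ∀ s, 0 < pW s := fun s => Finset.sum_pos (fun x _ => hp s x) hW
  set PW : ℝ := ∑ x ∈ W, pX x with hPWdef
  have hPW : 0 < PW := Finset.sum_pos (fun x _ => hpX x) hW
  have hPWs : ∑ s, pW s = PW := by
    rw [hPWdef, hpWdef]; exact Finset.sum_comm
  -- row sums of mergedJoint
  have hrow : ∀ s, (∑ o, mergedJoint W p s o) = pS s := by
    intro s
    rw [Fintype.sum_option]
    show pW s + ∑ x, (if x ∈ W then 0 else p s x) = pS s
    rw [sum_ite_not_mem]
    rw [hpWdef, hpSdef]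
    exact Finset.sum_add_sum_compl W (p s)
  have hcolnone : (∑ s, mergedJoint W p s none) = PW := by
    show ∑ s, pW s = PW
    exact hPWs
  have hcolsome : ∀ x, (∑ s, mergedJoint W p s (some x)) = if x ∈ W then 0 else pX x := by
    intro x
    by_cases hx : x ∈ W <;> simp [mergedJoint, hx, hpXdef]
  have hinner : ∀ s, (∑ o, mergedJoint W p s o * Real.log (mergedJoint W p s o /
      ((∑ o', mergedJoint W p s o') * (∑ s', mergedJoint W p s' o)))) =
      pW s * Real.log (pW s / (pS s * PW)) +
        ∑ x ∈ Wᶜ, p s x * Real.log (p s x / (pS s * pX x)) := by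
    intro s
    rw [Fintype.sum_option]
    simp only [hrow, hcolnone, hcolsome]
    congr 1
    rw [← sum_ite_not_mem W (fun x => p s x * Real.log (p s x / (pS s * pX x)))]
    apply Finset.sum_congr rfl
    intro x _
    by_cases hx : x ∈ W <;> simp [mergedJoint, hx]
  have hmi : mi (mergedJoint W p) = (∑ s, pW s * Real.log (pW s / (pS s * PW))) +
      ∑ s, ∑ x ∈ Wᶜ, p s x * Real.log (p s x / (pS s * pX x)) := by
    rw [mi, Finset.sum_congr rfl (fun s _ => hinner s), Finset.sum_add_distrib]
  have hmip : mi p = (∑ s, ∑ x ∈ W, p s x * Real.log (p s x / (pS s * pX x))) +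
      ∑ s, ∑ x ∈ Wᶜ, p s x * Real.log (p s x / (pS s * pX x)) := by
    rw [mi, ← Finset.sum_add_distrib]
    apply Finset.sum_congr rfl
    intro s _
    exact (Finset.sum_add_sum_compl W _).symm
  rw [hmi, hmip]
  -- reduce to the W-region identity
  have key : (∑ s, pW s * Real.log (pW s / (pS s * PW))) =
      (∑ s, ∑ x ∈ W, p s x * Real.log (p s x / (pS s * pX x))) + fset pX W - gset p W := by
    -- expand all logarithms
    have e1 : ∀ s, pW s * Real.log (pW s / (pS s * PW)) =
        pW s * Real.log (pW s) - pW s * Real.log (pS s) - pW s * Real.log PW := by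
      intro s
      rw [Real.log_div (ne_of_gt (hpW s)) (ne_of_gt (mul_pos (hpS s) hPW)),
        Real.log_mul (ne_of_gt (hpS s)) (ne_of_gt hPW)]
      ring
    have e2 : ∀ s, ∀ x ∈ W, p s x * Real.log (p s x / (pS s * pX x)) =
        p s x * Real.log (p s x) - p s x * Real.log (pS s) - p s x * Real.log (pX x) := by
      intro s x _
      rw [Real.log_div (ne_of_gt (hp s x)) (ne_of_gt (mul_pos (hpS s) (hpX x))),
        Real.log_mul (ne_of_gt (hpS s)) (ne_of_gt (hpX x))]
      ring
    have e3 : ∀ x ∈ W, pX x * Real.log (pX x / PW) =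
        pX x * Real.log (pX x) - pX x * Real.log PW := by
      intro x _
      rw [Real.log_div (ne_of_gt (hpX x)) (ne_of_gt hPW)]; ring
    have e4 : ∀ s, ∀ x ∈ W, p s x * Real.log (p s x / pW s) =
        p s x * Real.log (p s x) - p s x * Real.log (pW s) := by
      intro s x _
      rw [Real.log_div (ne_of_gt (hp s x)) (ne_of_gt (hpW s))]; ring
    rw [Finset.sum_congr rfl (fun s _ => e1 s)]
    rw [Finset.sum_congr rfl (fun s _ => Finset.sum_congr rfl (e2 s))]
    rw [show fset pX W = ∑ x ∈ W, pX x * Real.log (pX x / PW) from rfl,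
      Finset.sum_congr rfl e3]
    rw [show gset p W = ∑ s, ∑ x ∈ W, p s x * Real.log (p s x / pW s) from rfl,
      Finset.sum_congr rfl (fun s _ => Finset.sum_congr rfl (e4 s))]
    simp only [Finset.sum_sub_distrib]
    -- collapse the constant-log sums
    have c1 : ∑ s, pW s * Real.log PW = PW * Real.log PW := by
      rw [← Finset.sum_mul, hPWs]
    have c2 : ∀ s, ∑ x ∈ W, p s x * Real.log (pS s) = pW s * Real.log (pS s) := by
      intro s; rw [← Finset.sum_mul]
    have c3 : ∑ s, ∑ x ∈ W, p s x * Real.log (pX x) = ∑ x ∈ W, pX x * Real.log (pX x) := by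
      rw [Finset.sum_comm]
      exact Finset.sum_congr rfl (fun x _ => by rw [← Finset.sum_mul])
    have c4 : ∀ s, ∑ x ∈ W, p s x * Real.log (pW s) = pW s * Real.log (pW s) := by
      intro s; rw [← Finset.sum_mul]
    have c5 : ∑ x ∈ W, pX x * Real.log PW = PW * Real.log PW := by
      rw [← Finset.sum_mul]
    rw [Finset.sum_congr rfl (fun s _ => c2 s), Finset.sum_congr rfl (fun s _ => c4 s),
      c1, c3, c5]
    ring
  rw [key]
  ring

theorem iac_mdsf_step_nonincreasing {S X : Type*} [Fintype S] [Fintype X] [DecidableEq X]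
    (p : S → X → ℝ) (hp : ∀ s x, 0 < p s x) (hsum : ∑ s, ∑ x, p s x = 1)
    (lam : ℝ) (hlam0 : 0 ≤ lam) (hlam1 : lam ≤ 1)
    (Wstar : Finset X)
    (hmin : ∀ W : Finset X,
      (1 - lam) * fset (fun x => ∑ s, p s x) Wstar - gset p Wstar ≤
        (1 - lam) * fset (fun x => ∑ s, p s x) W - gset p W)
    (hcard : 2 ≤ Wstar.card) :
    mi (mergedJoint Wstar p) - lam * mi (selfMergedJoint Wstar (fun x => ∑ s, p s x)) ≤
      mi p - lam * ent (fun x => ∑ s, p s x) := by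
  have hS : Nonempty S := by
    by_contra h
    rw [not_nonempty_iff] at h
    simp at hsum
  have hW : Wstar.Nonempty := Finset.card_pos.mp (lt_of_lt_of_le (by norm_num) hcard)
  have hpX : ∀ x, 0 < ∑ s, p s x := fun x =>
    Finset.sum_pos (fun s _ => hp s x) Finset.univ_nonempty
  rw [miMerged p hp Wstar hW, miSelf _ hpX Wstar hW]
  have h0 := hmin ∅
  have hf0 : fset (fun x => ∑ s, p s x) (∅ : Finset X) = 0 := by simp [fset]
  have hg0 : gset p (∅ : Finset X) = 0 := by simp [gset]
  rw [hf0, hg0, mul_zero, sub_zero] at h0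
  linarith [h0]
end
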